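/- Fix η > 1, set η₁ = (1+η)/2, and fix ρ ∈ [1/2, 1]. There exists a constant c ∈ (0,1) depending only on η with the following property. Let K ≥ 2, t ≥ 3, let T_1, …, T_K be integers with 1 ≤ T_m ≤ t for all m, let μ_1 ≥ μ_2 ≥ … ≥ μ_K be reals with gaps Δ_m = μ_1 − μ_m, and for each m define B_m = max{ e, log t, t log(t) / Σ_{l=1}^K min{ T_m, T_l^ρ T_m^{1−ρ} } } and, given reals x_1, …, x_K, the index γ_m = x_m + sqrt(2 η log(B_m)/T_m). Suppose i, j are indices such that (a) x_j ≥ μ_j − sqrt( 2 η₁ log max(e, log T_j) / T_j ), (b) Δ_i > 0 and x_i ≤ μ_i + Δ_i/2, and (c) T_j ≤ c · min{ T_i, Δ_j^{−2} } (with Δ_j^{−2} = ∞ if Δ_j = 0). Then γ_j > γ_i. -/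

import Mathlib

/-!
Write `r = √(η₁/η) < 1`, `c = ((1 - r)/2)²` and `A = √(2η log B_j / T_j)` for the bonus of `j`.
Since `T_j ≤ c T_i ≤ T_i` and `m ↦ Σ_l min {T_m, T_l^ρ T_m^{1-ρ}}` is monotone in `T_m` (as
`ρ ≤ 1`), `B_i ≤ B_j`, so the bonus of `i` is at most `√c · A`. As `log T_j ≤ log t ≤ B_j`, the
deviation allowed in (a) is at most `r · A`, and (c) gives `Δ_j ≤ √c · A`. Hence
`γ_i ≤ μ_1 - Δ_i/2 + √c A < μ_1 + √c A = μ_1 - √c A + (1 - r) A ≤ γ_j`.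
-/

open MeasureTheory Real

/-- The confidence argument `B_m = max {e, log t, t log t / Σ_l min {T_m, T_l^ρ T_m^{1-ρ}}}`
built from the pull counts `T_1, …, T_K` (arms indexed `1, …, K`) at time `t`. -/
noncomputable def Bconf (K t : ℕ) (ρ : ℝ) (T : ℕ → ℕ) (m : ℕ) : ℝ :=
  max (Real.exp 1) (max (Real.log t)
    (t * Real.log t /
      ∑ l ∈ Finset.Icc 1 K, min ((T m : ℝ)) ((T l : ℝ) ^ ρ * (T m : ℝ) ^ (1 - ρ))))

/-- The index `γ_m = x_m + sqrt (2 η log (B_m) / T_m)` computed from the empirical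
mean `x_m` of arm `m`. -/
noncomputable def gammaIdx (K t : ℕ) (η ρ : ℝ) (T : ℕ → ℕ) (x : ℕ → ℝ) (m : ℕ) : ℝ :=
  x m + Real.sqrt (2 * η * Real.log (Bconf K t ρ T m) / T m)

section SumMinRpow

variable {ι : Type*} (s : Finset ι) (f : ι → ℝ) (ρ : ℝ)

theorem sum_min_rpow_mul_rpow_mono (hf : ∀ l, 0 ≤ f l) (hρ : ρ ≤ 1) {a b : ℝ} (ha : 0 ≤ a)
    (hab : a ≤ b) :
    ∑ l ∈ s, min a (f l ^ ρ * a ^ (1 - ρ)) ≤ ∑ l ∈ s, min b (f l ^ ρ * b ^ (1 - ρ)) :=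
  Finset.sum_le_sum fun l _ => min_le_min hab <|
    mul_le_mul_of_nonneg_left (rpow_le_rpow ha hab (by linarith)) (rpow_nonneg (hf l) ρ)

theorem le_sum_min_rpow_mul_rpow (hf : ∀ l, 0 ≤ f l) {j : ι} (hj : j ∈ s) (hfj : 0 < f j) :
    f j ≤ ∑ l ∈ s, min (f j) (f l ^ ρ * f j ^ (1 - ρ)) := by
  calc f j = min (f j) (f j ^ ρ * f j ^ (1 - ρ)) := by
        rw [← rpow_add hfj, add_sub_cancel, rpow_one, min_self]
    _ ≤ ∑ l ∈ s, min (f j) (f l ^ ρ * f j ^ (1 - ρ)) :=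
      Finset.single_le_sum (f := fun l => min (f j) (f l ^ ρ * f j ^ (1 - ρ)))
        (fun l _ => le_min (hf j) (mul_nonneg (rpow_nonneg (hf l) _) (rpow_nonneg (hf j) _))) hj

end SumMinRpow

section Bconf

variable {K t : ℕ} {ρ : ℝ} {T : ℕ → ℕ}

theorem Bconf_anti (hρ : ρ ≤ 1) {i j : ℕ} (hj : j ∈ Finset.Icc 1 K) (hTj : 0 < T j)
    (hji : T j ≤ T i) : Bconf K t ρ T i ≤ Bconf K t ρ T j := by
  have hT : ∀ l, (0 : ℝ) ≤ T l := fun l => Nat.cast_nonneg _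
  have hTj' : (0 : ℝ) < T j := by exact_mod_cast hTj
  have hsum_pos := hTj'.trans_le (le_sum_min_rpow_mul_rpow _ _ ρ hT hj hTj')
  refine max_le_max le_rfl (max_le_max le_rfl ?_)
  exact div_le_div_of_nonneg_left (by positivity) hsum_pos
    (sum_min_rpow_mul_rpow_mono _ _ ρ hT hρ hTj'.le (by exact_mod_cast hji))

theorem Bconf_pos (m : ℕ) : 0 < Bconf K t ρ T m :=
  (exp_pos 1).trans_le (le_max_left _ _)

theorem one_le_log_Bconf (m : ℕ) : 1 ≤ log (Bconf K t ρ T m) :=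
  (le_log_iff_exp_le (Bconf_pos m)).2 (le_max_left _ _)

theorem max_exp_one_log_le_Bconf {m : ℕ} (hTm : 0 < T m) (hTmt : T m ≤ t) :
    max (exp 1) (log (T m)) ≤ Bconf K t ρ T m := by
  refine max_le (le_max_left _ _) ?_
  calc log (T m) ≤ log t := log_le_log (by exact_mod_cast hTm) (by exact_mod_cast hTmt)
    _ ≤ Bconf K t ρ T m := (le_max_left _ _).trans (le_max_right _ _)

end Bconf

theorem sqrt_div_le_sqrt_mul_sqrt_div {a c Li Lj Ti Tj : ℝ} (ha : 0 ≤ a) (hLi : 0 ≤ Li)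
    (hL : Li ≤ Lj) (hc : 0 < c) (hTj : 0 < Tj) (hT : Tj ≤ c * Ti) :
    √(a * Li / Ti) ≤ √c * √(a * Lj / Tj) := by
  have hTi : 0 < Ti := pos_of_mul_pos_right (hTj.trans_le hT) hc.le
  rw [← sqrt_mul hc.le, mul_div_assoc']
  refine sqrt_le_sqrt ?_
  rw [div_le_div_iff₀ hTi hTj]
  calc a * Li * Tj ≤ a * Lj * (c * Ti) :=
        mul_le_mul (mul_le_mul_of_nonneg_left hL ha) hT hTj.le (mul_nonneg ha (hLi.trans hL))
    _ = c * (a * Lj) * Ti := by ring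

theorem sqrt_mul_div_le_sqrt_div_mul {η η₁ M L T : ℝ} (hη : 0 < η) (hη₁ : 0 ≤ η₁) (hT : 0 ≤ T)
    (hML : M ≤ L) : √(2 * η₁ * M / T) ≤ √(η₁ / η) * √(2 * η * L / T) := by
  rw [← sqrt_mul (by positivity), show η₁ / η * (2 * η * L / T) = 2 * η₁ * L / T by
    field_simp]
  gcongr

theorem le_sqrt_mul_sqrt_div_of_le_mul_inv_sq {Δ c u T : ℝ} (hc : 0 ≤ c) (hT : 0 < T) (hu : 1 ≤ u)
    (hΔ : Δ ≠ 0 → T ≤ c * (Δ ^ 2)⁻¹) : Δ ≤ √c * √(u / T) := by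
  rcases le_or_gt Δ 0 with hneg | hpos
  · exact hneg.trans (by positivity)
  have hsq : Δ ^ 2 ≤ c * (u / T) := by
    have h := hΔ hpos.ne'
    rw [← div_eq_mul_inv, le_div_iff₀ (by positivity)] at h
    rw [← mul_div_assoc, le_div_iff₀ hT]
    nlinarith [sq_nonneg Δ]
  rw [← sqrt_mul hc]
  exact le_sqrt_of_sq_le hsq

noncomputable def chasingConst (η η₁ : ℝ) : ℝ := ((1 - √(η₁ / η)) / 2) ^ 2

section chasingConst

variable {η η₁ : ℝ}

theorem sqrt_div_lt_one (hη₁ : 0 ≤ η₁) (h : η₁ < η) : √(η₁ / η) < 1 := by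
  rw [sqrt_lt' one_pos, one_pow, div_lt_one (hη₁.trans_lt h)]
  exact h

theorem sqrt_chasingConst (hη₁ : 0 ≤ η₁) (h : η₁ < η) :
    √(chasingConst η η₁) = (1 - √(η₁ / η)) / 2 :=
  sqrt_sq (by linarith [sqrt_div_lt_one hη₁ h])

theorem chasingConst_pos (hη₁ : 0 ≤ η₁) (h : η₁ < η) : 0 < chasingConst η η₁ :=
  pow_pos (by linarith [sqrt_div_lt_one hη₁ h]) 2

theorem chasingConst_lt_one (hη₁ : 0 ≤ η₁) (h : η₁ < η) : chasingConst η η₁ < 1 := by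
  have := sqrt_div_lt_one hη₁ h
  have := sqrt_nonneg (η₁ / η)
  unfold chasingConst
  nlinarith

end chasingConst

theorem stmt_10_general (η η₁ ρ : ℝ) (hη : 1 < η) (hη₁ : η₁ = (1 + η) / 2)
    (hρ1 : ρ ≤ 1) :
    ∃ c : ℝ, 0 < c ∧ c < 1 ∧
      ∀ (K t : ℕ) (T : ℕ → ℕ) (μ x : ℕ → ℝ) (i j : ℕ),
        2 ≤ K → 3 ≤ t →
        (∀ m, 1 ≤ m → m ≤ K → 1 ≤ T m ∧ T m ≤ t) →
        (∀ m m', 1 ≤ m → m ≤ m' → m' ≤ K → μ m' ≤ μ m) →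
        1 ≤ i → i ≤ K → 1 ≤ j → j ≤ K →
        μ j - Real.sqrt (2 * η₁ * Real.log (max (Real.exp 1) (Real.log (T j))) / T j)
          ≤ x j →
        0 < μ 1 - μ i →
        x i ≤ μ i + (μ 1 - μ i) / 2 →
        (T j : ℝ) ≤ c * T i →
        (μ 1 - μ j ≠ 0 → (T j : ℝ) ≤ c * ((μ 1 - μ j) ^ 2)⁻¹) →
        gammaIdx K t η ρ T x i < gammaIdx K t η ρ T x j := by
  have hη₁0 : 0 ≤ η₁ := by linarith
  have hη₁η : η₁ < η := by linarith
  have hc := chasingConst_pos hη₁0 hη₁η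
  have hc1 := chasingConst_lt_one hη₁0 hη₁η
  refine ⟨chasingConst η η₁, hc, hc1, ?_⟩
  intro K t T μ x i j _ _ hT _ _ _ hj1 hjK hxj hΔi hxi hTji hTjΔ
  obtain ⟨hTj1, hTjt⟩ := hT j hj1 hjK
  have hTj : (0 : ℝ) < T j := by exact_mod_cast hTj1
  have hTji' : T j ≤ T i := by
    exact_mod_cast hTji.trans (mul_le_of_le_one_left (Nat.cast_nonneg _) hc1.le)
  have hLj : 1 ≤ log (Bconf K t ρ T j) := one_le_log_Bconf j
  have hLij : log (Bconf K t ρ T i) ≤ log (Bconf K t ρ T j) :=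
    log_le_log (Bconf_pos i) (Bconf_anti hρ1 (Finset.mem_Icc.2 ⟨hj1, hjK⟩) hTj1 hTji')
  have hMLj : log (max (exp 1) (log (T j))) ≤ log (Bconf K t ρ T j) :=
    log_le_log ((exp_pos 1).trans_le (le_max_left _ _)) (max_exp_one_log_le_Bconf hTj1 hTjt)
  have hbonus_i := sqrt_div_le_sqrt_mul_sqrt_div (a := 2 * η) (by linarith)
    (zero_le_one.trans (one_le_log_Bconf i)) hLij hc hTj hTji
  have hdev_j := sqrt_mul_div_le_sqrt_div_mul (zero_lt_one.trans hη) hη₁0 hTj.le hMLj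
  have hgap_j := le_sqrt_mul_sqrt_div_of_le_mul_inv_sq (u := 2 * η * log (Bconf K t ρ T j))
    hc.le hTj (by nlinarith) hTjΔ
  rw [sqrt_chasingConst hη₁0 hη₁η] at hbonus_i hgap_j
  unfold gammaIdx
  linarith

/-- the deterministic "chasing" lemma.  Fix `η > 1`, `η₁ = (1+η)/2` and
`ρ ∈ [1/2, 1]`.  There is a constant `c ∈ (0,1)` depending only on `η` such that for all
`K ≥ 2`, `t ≥ 3`, pull counts `1 ≤ T_m ≤ t`, sorted means `μ_1 ≥ … ≥ μ_K` with gaps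
`Δ_m = μ_1 - μ_m`, and empirical means `x_1, …, x_K`: if
(a) `x_j ≥ μ_j - sqrt (2 η₁ log (max e (log T_j)) / T_j)`,
(b) `Δ_i > 0` and `x_i ≤ μ_i + Δ_i / 2`, and
(c) `T_j ≤ c · min {T_i, Δ_j⁻²}` (the second constraint being vacuous when `Δ_j = 0`),
then `γ_j > γ_i`. -/
theorem stmt_10 (η η₁ ρ : ℝ) (hη : 1 < η) (hη₁ : η₁ = (1 + η) / 2)
    (hρ0 : 1 / 2 ≤ ρ) (hρ1 : ρ ≤ 1) :
    ∃ c : ℝ, 0 < c ∧ c < 1 ∧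
      ∀ (K t : ℕ) (T : ℕ → ℕ) (μ x : ℕ → ℝ) (i j : ℕ),
        2 ≤ K → 3 ≤ t →
        (∀ m, 1 ≤ m → m ≤ K → 1 ≤ T m ∧ T m ≤ t) →
        (∀ m m', 1 ≤ m → m ≤ m' → m' ≤ K → μ m' ≤ μ m) →
        1 ≤ i → i ≤ K → 1 ≤ j → j ≤ K →
        μ j - Real.sqrt (2 * η₁ * Real.log (max (Real.exp 1) (Real.log (T j))) / T j)
          ≤ x j →
        0 < μ 1 - μ i →
        x i ≤ μ i + (μ 1 - μ i) / 2 →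
        (T j : ℝ) ≤ c * T i →
        (μ 1 - μ j ≠ 0 → (T j : ℝ) ≤ c * ((μ 1 - μ j) ^ 2)⁻¹) →
        gammaIdx K t η ρ T x i < gammaIdx K t η ρ T x j :=
  stmt_10_general η η₁ ρ hη hη₁ hρ1
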